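/- Let 0 < a ≤ 1/2, q(s) = (a/2)s² − s + 1 and s* = (1 − √(1 − 2a))/a, and let Δ_S(s) = −q(s)/(q'(s) + (a/2)q(s)). Then for all s ∈ [0, s*]: (1) q'(s)² − a·q(s) = (1 − 2a) + a·q(s) ≥ 0; (2) Δ_S is monotonically decreasing and nonnegative on [0, s*]; (3) s + Δ_S(s) ≤ s*. -/

import Mathlib

/-! With `u = 1 - a s` and `r = √(1 - 2a)` one has `a s* = 1 - r`, `2a q(s) = u² - r²` and
`q'(s) + (a/2) q(s) = -(4u - u² + r²)/4`, so `Δ_S(s) = (2/a) g(u)` with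
`g(u) = (u² - r²)/(4u - u² + r²)`, and `[0, s*]` becomes `u ∈ [r, 1]`.
Everything then reduces to two facts about `g`: cross-multiplying `g(u) ≤ g(v)` leaves
`4(v - u)(uv + r²) ≥ 0`, and cross-multiplying `2 g(u) ≤ u - r` leaves `(u - r)²(2 - u - r) ≥ 0`. -/

open Set

noncomputable section

def adimQuad (a s : ℝ) : ℝ := a / 2 * s ^ 2 - s + 1

def steffensenRatio (r u : ℝ) : ℝ := (u ^ 2 - r ^ 2) / (4 * u - u ^ 2 + r ^ 2)

end

section adimQuad

variable (a : ℝ)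

theorem hasDerivAt_adimQuad (s : ℝ) : HasDerivAt (adimQuad a) (a * s - 1) s :=
  ((((hasDerivAt_pow 2 s).const_mul (a / 2)).sub (hasDerivAt_id' s)).add_const 1).congr_deriv
    (by ring)

theorem deriv_adimQuad (s : ℝ) : deriv (adimQuad a) s = a * s - 1 :=
  (hasDerivAt_adimQuad a s).deriv

theorem deriv_adimQuad_sq_sub_mul (s : ℝ) :
    deriv (adimQuad a) s ^ 2 - a * adimQuad a s = (1 - 2 * a) + a * adimQuad a s := by
  rw [deriv_adimQuad, adimQuad]
  ring

variable {a}

theorem two_mul_adimQuad {r : ℝ} (hr : r ^ 2 = 1 - 2 * a) (s : ℝ) :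
    2 * a * adimQuad a s = (1 - a * s) ^ 2 - r ^ 2 := by
  rw [hr, adimQuad]
  ring

theorem steffensenCorrection_eq {r : ℝ} (ha : a ≠ 0) (hr : r ^ 2 = 1 - 2 * a) (s : ℝ) :
    -adimQuad a s / (deriv (adimQuad a) s + a / 2 * adimQuad a s)
      = 2 / a * steffensenRatio r (1 - a * s) := by
  have hq : adimQuad a s = ((1 - a * s) ^ 2 - r ^ 2) / (2 * a) := by
    rw [← two_mul_adimQuad hr, mul_div_cancel_left₀ _ (mul_ne_zero two_ne_zero ha)]
  have hden : deriv (adimQuad a) s + a / 2 * adimQuad a s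
      = -((4 * (1 - a * s) - (1 - a * s) ^ 2 + r ^ 2) / 4) := by
    rw [deriv_adimQuad, hq]
    field_simp
    ring
  rw [hden, hq, steffensenRatio]
  generalize 4 * (1 - a * s) - (1 - a * s) ^ 2 + r ^ 2 = D
  ring

end adimQuad

section steffensenRatio

variable {r u v : ℝ}

theorem steffensenRatio_denom_nonneg (hu : 0 ≤ u) (hu4 : u ≤ 4) : 0 ≤ 4 * u - u ^ 2 + r ^ 2 := by
  nlinarith [sq_nonneg r]

theorem steffensenRatio_nonneg (hr : 0 ≤ r) (hu : r ≤ u) (hu4 : u ≤ 4) :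
    0 ≤ steffensenRatio r u :=
  div_nonneg (by nlinarith) (steffensenRatio_denom_nonneg (hr.trans hu) hu4)

theorem steffensenRatio_monotoneOn (hr : 0 ≤ r) : MonotoneOn (steffensenRatio r) (Icc r 2) := by
  intro u ⟨hru, hu2⟩ v ⟨hrv, hv2⟩ huv
  rcases (steffensenRatio_denom_nonneg (r := r) (hr.trans hru) (by linarith)).eq_or_lt with
    hDu | hDu
  · rw [steffensenRatio, ← hDu, div_zero]
    exact steffensenRatio_nonneg hr hrv (by linarith)
  -- the denominator is increasing on `[0, 2]`
  have hDv : 0 < 4 * v - v ^ 2 + r ^ 2 := by nlinarith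
  rw [steffensenRatio, steffensenRatio, div_le_div_iff₀ hDu hDv]
  nlinarith [mul_nonneg (sub_nonneg.2 huv) (add_nonneg (mul_nonneg (hr.trans hru) (hr.trans hrv))
    (sq_nonneg r))]

theorem two_mul_steffensenRatio_le (hr : 0 ≤ r) (hu : r ≤ u) (hu2 : u ≤ 2 - r) :
    2 * steffensenRatio r u ≤ u - r := by
  rcases (steffensenRatio_denom_nonneg (r := r) (hr.trans hu) (by linarith)).eq_or_lt with
    hD | hD
  · rw [steffensenRatio, ← hD, div_zero, mul_zero]
    linarith
  rw [steffensenRatio, ← mul_div_assoc, div_le_iff₀ hD]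
  have key : (u - r) * (4 * u - u ^ 2 + r ^ 2) - 2 * (u ^ 2 - r ^ 2) = (u - r) ^ 2 * (2 - u - r) :=
    by ring
  linarith [mul_nonneg (sq_nonneg (u - r)) (by linarith : (0 : ℝ) ≤ 2 - u - r)]

end steffensenRatio

/-- **Monotonicity of the Steffensen correction for the adimensional quadratic.**
Let `0 < a ≤ 1/2`, `q(s) = (a/2)s² − s + 1`, `s* = (1 − √(1 − 2a))/a` and
`Δ_S(s) = −q(s)/(q'(s) + (a/2)q(s))`.  Then for all `s ∈ [0, s*]`:
(1) `q'(s)² − a·q(s) = (1 − 2a) + a·q(s) ≥ 0`;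
(2) `Δ_S` is monotonically decreasing and nonnegative on `[0, s*]`;
(3) `s + Δ_S(s) ≤ s*`. -/
theorem stmt_11 (a : ℝ) (ha : 0 < a) (ha' : a ≤ 1 / 2)
    (q : ℝ → ℝ) (hq : q = fun s => a / 2 * s ^ 2 - s + 1)
    (sstar : ℝ) (hsstar : sstar = (1 - Real.sqrt (1 - 2 * a)) / a)
    (ΔS : ℝ → ℝ)
    (hΔS : ΔS = fun s => -q s / (deriv q s + a / 2 * q s)) :
    (∀ s ∈ Set.Icc (0 : ℝ) sstar,
      (deriv q s) ^ 2 - a * q s = (1 - 2 * a) + a * q s ∧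
      0 ≤ (1 - 2 * a) + a * q s) ∧
    AntitoneOn ΔS (Set.Icc 0 sstar) ∧
    (∀ s ∈ Set.Icc (0 : ℝ) sstar, 0 ≤ ΔS s) ∧
    (∀ s ∈ Set.Icc (0 : ℝ) sstar, s + ΔS s ≤ sstar) := by
  replace hq : q = adimQuad a := hq
  subst hq hΔS
  set r := Real.sqrt (1 - 2 * a)
  have hr0 : 0 ≤ r := Real.sqrt_nonneg _
  have hr1 : r ≤ 1 := Real.sqrt_le_one.2 (by linarith)
  have hr : r ^ 2 = 1 - 2 * a := Real.sq_sqrt (by linarith)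
  have hasstar : a * sstar = 1 - r := by
    rw [hsstar, mul_div_cancel₀ _ ha.ne']
  have hmem : ∀ s ∈ Icc 0 sstar, r ≤ 1 - a * s ∧ 1 - a * s ≤ 1 := fun s ⟨hs0, hs⟩ =>
    ⟨by nlinarith, by nlinarith⟩
  simp only [steffensenCorrection_eq ha.ne' hr]
  refine ⟨fun s hs => ⟨?_, ?_⟩, ?_, fun s hs => ?_, fun s hs => ?_⟩
  · exact deriv_adimQuad_sq_sub_mul a s
  · have h2q := two_mul_adimQuad hr s
    nlinarith [hmem s hs]
  · intro s hs t ht hst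
    obtain ⟨hrs, hs1⟩ := hmem s hs
    obtain ⟨hrt, ht1⟩ := hmem t ht
    exact mul_le_mul_of_nonneg_left (steffensenRatio_monotoneOn hr0 ⟨hrt, by linarith⟩
      ⟨hrs, by linarith⟩ (by gcongr)) (by positivity)
  · obtain ⟨hrs, hs1⟩ := hmem s hs
    exact mul_nonneg (by positivity) (steffensenRatio_nonneg hr0 hrs (by linarith))
  · obtain ⟨hrs, hs1⟩ := hmem s hs
    have := two_mul_steffensenRatio_le hr0 hrs (by linarith)
    refine le_of_mul_le_mul_left ?_ ha
    rw [mul_add, ← mul_assoc, mul_div_cancel₀ _ ha.ne', hasstar]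
    linarith
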